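/- Let L be the operator (Ly)(x) = (-ε²y₁''(x) + b₁₁(x)y₁(x) + b₁₂(x)y₂(x), -μ²y₂''(x) + b₂₁(x)y₁(x) + b₂₂(x)y₂(x)) on (0,1), with b₁₂, b₂₁ ≤ 0 and λ² < min{b₁₁+b₁₂, b₂₁+b₂₂} on [0,1]. Suppose y = (y₁,y₂) is C² on (0,1), continuous on [0,1], satisfies the Robin conditions α_k y_k(0) - c_k β_k y_k'(0) ≥ 0 and γ_k y_k(1) + c_k δ_k y_k'(1) ≥ 0 (k = 1,2, with c₁ = ε, c₂ = μ, α_k,β_k ≥ 0, α_k+β_k > 0, γ_k > 0, δ_k ≥ 0), and Ly ≥ 0 componentwise on (0,1). Then y₁(x) ≥ 0 and y₂(x) ≥ 0 for all x ∈ [0,1]. -/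

import Mathlib

/-!
Divide both components by the positive test function `t x = cosh (κ (x - 1/2))` with
`κ = λ / μ`, and let `m` be the minimum over `[0, 1]` of `min (y₁ / t) (y₂ / t)`, attained by
the component `k` at `x₀`. If `m < 0`, then `y_k - m t ≥ 0` vanishes at `x₀`. Since `t' (0) < 0`
and `t' (1) > 0`, `t` satisfies both Robin conditions strictly, so the sign of the derivative of
`y_k - m t` at an endpoint contradicts the Robin condition of `y_k`. At an interior point the
second derivative of `y_k - m t` is nonnegative and, as the coupling coefficient is `≤ 0` and the
other component is `≥ m t`, `0 ≤ (L y)_k (x₀) ≤ m (L (t, t))_k (x₀) < 0`, because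
`c_k² κ² ≤ λ² < b_kk + b_kl`.
-/

open Set Filter Topology Real

section MinimumConditions

variable {g g' : ℝ → ℝ} {a b d x : ℝ}

theorem IsMinOn.hasDerivAt_nonneg_of_left (hab : a < b) (h : IsMinOn g (Icc a b) a)
    (hg : HasDerivAt g d a) : 0 ≤ d := by
  have hcone : b - a ∈ posTangentConeAt (Icc a b) a :=
    sub_mem_posTangentConeAt_of_segment_subset (segment_eq_Icc hab.le).subset
  have := h.localize.hasFDerivWithinAt_nonneg hg.hasFDerivAt.hasFDerivWithinAt hcone
  simp only [ContinuousLinearMap.toSpanSingleton_apply, smul_eq_mul] at this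
  exact nonneg_of_mul_nonneg_right this (sub_pos.2 hab)

theorem IsMinOn.hasDerivAt_nonpos_of_right (hab : a < b) (h : IsMinOn g (Icc a b) b)
    (hg : HasDerivAt g d b) : d ≤ 0 := by
  have hcone : a - b ∈ posTangentConeAt (Icc a b) b :=
    sub_mem_posTangentConeAt_of_segment_subset (by rw [segment_symm, segment_eq_Icc hab.le])
  have := h.localize.hasFDerivWithinAt_nonneg hg.hasFDerivAt.hasFDerivWithinAt hcone
  simp only [ContinuousLinearMap.toSpanSingleton_apply, smul_eq_mul] at this
  exact nonpos_of_mul_nonneg_right this (sub_neg.2 hab)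

theorem IsLocalMin.hasDerivAt_deriv_nonneg (h : IsLocalMin g x)
    (hg : ∀ᶠ z in 𝓝 x, HasDerivAt g (g' z) z) (hg' : HasDerivAt g' d x) : 0 ≤ d := by
  by_contra! hd
  -- `g' x = 0` and `g'' x < 0` make `g' < 0` just right of `x`, so `g` decreases there.
  have hx : g' x = 0 := h.hasDerivAt_eq_zero hg.self_of_nhds
  have hslope : ∀ᶠ z in 𝓝[>] x, slope g' x z < 0 :=
    ((hasDerivAt_iff_tendsto_slope.mp hg').mono_left (nhdsGT_le_nhdsNE x)).eventually_lt_const hd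
  obtain ⟨l, u, ⟨hlx, hxu⟩, hS⟩ := mem_nhds_iff_exists_Ioo_subset.mp (hg.and h)
  obtain ⟨r, hxr, hB⟩ := mem_nhdsGT_iff_exists_Ioo_subset.mp hslope
  obtain ⟨z, hxz, hz⟩ := exists_between (lt_min hxu hxr)
  have hIcc : Icc x z ⊆ Ioo l u := fun w hw =>
    ⟨hlx.trans_le hw.1, hw.2.trans_lt (hz.trans_le (min_le_left _ _))⟩
  obtain ⟨w, hw, hgw⟩ := exists_hasDerivAt_eq_slope g g' hxz
    (fun w hw => (hS (hIcc hw)).1.continuousAt.continuousWithinAt)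
    (fun w hw => (hS (hIcc (Ioo_subset_Icc_self hw))).1)
  have hw' : g' w < 0 := by
    have hneg : slope g' x w < 0 := hB ⟨hw.1, hw.2.trans (hz.trans_le (min_le_right _ _))⟩
    rw [slope_def_field, hx, sub_zero] at hneg
    by_contra! hw0
    exact hneg.not_ge (div_nonneg hw0 (sub_pos.2 hw.1).le)
  have hgz : g z < g x := by
    by_contra! hz0
    exact (hgw ▸ hw').not_ge (div_nonneg (sub_nonneg.2 hz0) (sub_pos.2 hxz).le)
  exact hgz.not_ge (hS (hIcc ⟨hxz.le, le_rfl⟩)).2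

end MinimumConditions

section Touching

variable {y y' y'' t t' t'' yo bs bo : ℝ → ℝ} {c α β γ δ m x₀ : ℝ}

theorem nonneg_of_touch_left (hcβ : 0 ≤ c * β) (ht : 0 < α * t 0 - c * β * t' 0)
    (hmin : IsMinOn (fun x => y x - m * t x) (Icc 0 1) 0)
    (hy : HasDerivAt y (y' 0) 0) (htd : HasDerivAt t (t' 0) 0)
    (hR : 0 ≤ α * y 0 - c * β * y' 0) (htouch : y 0 = m * t 0) : 0 ≤ m := by
  have hd : 0 ≤ y' 0 - m * t' 0 :=
    hmin.hasDerivAt_nonneg_of_left one_pos (hy.sub (htd.const_mul m))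
  refine nonneg_of_mul_nonneg_left ?_ ht
  calc 0 ≤ α * y 0 - c * β * y' 0 := hR
    _ ≤ α * y 0 - c * β * (m * t' 0) := by gcongr; linarith
    _ = m * (α * t 0 - c * β * t' 0) := by rw [htouch]; ring

theorem nonneg_of_touch_right (hcδ : 0 ≤ c * δ) (ht : 0 < γ * t 1 + c * δ * t' 1)
    (hmin : IsMinOn (fun x => y x - m * t x) (Icc 0 1) 1)
    (hy : HasDerivAt y (y' 1) 1) (htd : HasDerivAt t (t' 1) 1)
    (hR : 0 ≤ γ * y 1 + c * δ * y' 1) (htouch : y 1 = m * t 1) : 0 ≤ m := by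
  have hd : y' 1 - m * t' 1 ≤ 0 :=
    hmin.hasDerivAt_nonpos_of_right one_pos (hy.sub (htd.const_mul m))
  refine nonneg_of_mul_nonneg_left ?_ ht
  calc 0 ≤ γ * y 1 + c * δ * y' 1 := hR
    _ ≤ γ * y 1 + c * δ * (m * t' 1) := by gcongr; linarith
    _ = m * (γ * t 1 + c * δ * t' 1) := by rw [htouch]; ring

theorem nonneg_of_touch_interior (hx₀ : x₀ ∈ Ioo 0 1) (hbo : bo x₀ ≤ 0)
    (ht : 0 < -c ^ 2 * t'' x₀ + (bs x₀ + bo x₀) * t x₀)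
    (hmin : IsMinOn (fun x => y x - m * t x) (Icc 0 1) x₀)
    (hy : ∀ x ∈ Ioo 0 1, HasDerivAt y (y' x) x) (hyy : HasDerivAt y' (y'' x₀) x₀)
    (htd : ∀ x, HasDerivAt t (t' x) x) (htt : HasDerivAt t' (t'' x₀) x₀)
    (hL : 0 ≤ -c ^ 2 * y'' x₀ + bs x₀ * y x₀ + bo x₀ * yo x₀)
    (htouch : y x₀ = m * t x₀) (hyo : m * t x₀ ≤ yo x₀) : 0 ≤ m := by
  have hloc : IsLocalMin (fun x => y x - m * t x) x₀ :=
    hmin.localize.isLocalMin (Icc_mem_nhds hx₀.1 hx₀.2)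
  have hd : 0 ≤ y'' x₀ - m * t'' x₀ :=
    hloc.hasDerivAt_deriv_nonneg (g' := fun x => y' x - m * t' x)
      (eventually_of_mem (Ioo_mem_nhds hx₀.1 hx₀.2) fun x hx => (hy x hx).sub ((htd x).const_mul m))
      (hyy.sub (htt.const_mul m))
  refine nonneg_of_mul_nonneg_left ?_ ht
  have hcy : -c ^ 2 * y'' x₀ ≤ -c ^ 2 * (m * t'' x₀) :=
    mul_le_mul_of_nonpos_left (by linarith) (neg_nonpos.2 (sq_nonneg c))
  have hco : bo x₀ * yo x₀ ≤ bo x₀ * (m * t x₀) := mul_le_mul_of_nonpos_left hyo hbo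
  calc 0 ≤ -c ^ 2 * y'' x₀ + bs x₀ * y x₀ + bo x₀ * yo x₀ := hL
    _ ≤ -c ^ 2 * (m * t'' x₀) + bs x₀ * (m * t x₀) + bo x₀ * (m * t x₀) := by
      rw [htouch]; linarith
    _ = m * (-c ^ 2 * t'' x₀ + (bs x₀ + bo x₀) * t x₀) := by ring

theorem nonneg_of_touch (hcβ : 0 ≤ c * β) (hcδ : 0 ≤ c * δ)
    (htR0 : 0 < α * t 0 - c * β * t' 0) (htR1 : 0 < γ * t 1 + c * δ * t' 1)
    (htL : ∀ x ∈ Ioo 0 1, 0 < -c ^ 2 * t'' x + (bs x + bo x) * t x)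
    (hbo : ∀ x ∈ Ioo 0 1, bo x ≤ 0)
    (hy : ∀ x ∈ Icc 0 1, HasDerivAt y (y' x) x) (hyy : ∀ x ∈ Ioo 0 1, HasDerivAt y' (y'' x) x)
    (htd : ∀ x, HasDerivAt t (t' x) x) (htt : ∀ x, HasDerivAt t' (t'' x) x)
    (hR0 : 0 ≤ α * y 0 - c * β * y' 0) (hR1 : 0 ≤ γ * y 1 + c * δ * y' 1)
    (hL : ∀ x ∈ Ioo 0 1, 0 ≤ -c ^ 2 * y'' x + bs x * y x + bo x * yo x)
    (hx₀ : x₀ ∈ Icc 0 1) (hlow : ∀ x ∈ Icc 0 1, m * t x ≤ y x)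
    (htouch : y x₀ = m * t x₀) (hyo : m * t x₀ ≤ yo x₀) : 0 ≤ m := by
  have hmin : IsMinOn (fun x => y x - m * t x) (Icc 0 1) x₀ := isMinOn_iff.2 fun x hx => by
    simpa only [htouch, sub_self, sub_nonneg] using hlow x hx
  rcases eq_endpoints_or_mem_Ioo_of_mem_Icc hx₀ with rfl | rfl | hx₀
  · exact nonneg_of_touch_left hcβ htR0 hmin (hy 0 (left_mem_Icc.2 zero_le_one)) (htd 0) hR0 htouch
  · exact nonneg_of_touch_right hcδ htR1 hmin (hy 1 (right_mem_Icc.2 zero_le_one)) (htd 1) hR1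
      htouch
  · exact nonneg_of_touch_interior hx₀ (hbo x₀ hx₀) (htL x₀ hx₀) hmin
      (fun x hx => hy x (Ioo_subset_Icc_self hx)) (hyy x₀ hx₀) htd (htt x₀) (hL x₀ hx₀) htouch hyo

end Touching

theorem IsCompact.exists_touching_multiple {X : Type*} [TopologicalSpace X] {K : Set X}
    (hK : IsCompact K) (hne : K.Nonempty) {y₁ y₂ t : X → ℝ} (hy₁ : ContinuousOn y₁ K)
    (hy₂ : ContinuousOn y₂ K) (ht : ContinuousOn t K) (htpos : ∀ x ∈ K, 0 < t x) :
    ∃ m, ∃ x₀ ∈ K, (∀ x ∈ K, m * t x ≤ y₁ x ∧ m * t x ≤ y₂ x) ∧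
      (y₁ x₀ = m * t x₀ ∨ y₂ x₀ = m * t x₀) := by
  have ht0 : ∀ x ∈ K, t x ≠ 0 := fun x hx => (htpos x hx).ne'
  obtain ⟨x₀, hx₀, hmin⟩ := hK.exists_isMinOn hne (f := fun x => min (y₁ x / t x) (y₂ x / t x))
    fun x hx => ((hy₁.div ht ht0) x hx).min ((hy₂.div ht ht0) x hx)
  refine ⟨min (y₁ x₀ / t x₀) (y₂ x₀ / t x₀), x₀, hx₀, fun x hx => ?_, ?_⟩
  · simp only [← le_div_iff₀ (htpos x hx), ← le_min_iff]
    exact isMinOn_iff.1 hmin x hx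
  · rcases min_choice (y₁ x₀ / t x₀) (y₂ x₀ / t x₀) with h | h <;>
      rw [h, div_mul_cancel₀ _ (ht0 x₀ hx₀)]
    exacts [Or.inl rfl, Or.inr rfl]

-- The linear test function `2 - x` would need `γ > c δ` at `x = 1`; `cosh` has `t' (1) > 0`.
noncomputable def centeredCosh (κ x : ℝ) : ℝ := cosh (κ * (x - 1 / 2))

theorem centeredCosh_pos (κ x : ℝ) : 0 < centeredCosh κ x := cosh_pos _

theorem continuous_centeredCosh (κ : ℝ) : Continuous (centeredCosh κ) := by
  unfold centeredCosh; fun_prop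

theorem hasDerivAt_centeredCosh (κ x : ℝ) :
    HasDerivAt (centeredCosh κ) (κ * sinh (κ * (x - 1 / 2))) x := by
  have h := ((hasDerivAt_id' x).sub_const (1 / 2)).const_mul κ
  rw [mul_one] at h
  exact ((hasDerivAt_cosh _).comp x h).congr_deriv (mul_comm _ _)

theorem hasDerivAt_deriv_centeredCosh (κ x : ℝ) :
    HasDerivAt (fun x => κ * sinh (κ * (x - 1 / 2))) (κ ^ 2 * centeredCosh κ x) x := by
  have h := ((hasDerivAt_id' x).sub_const (1 / 2)).const_mul κ
  rw [mul_one] at h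
  exact (((hasDerivAt_sinh _).comp x h).const_mul κ).congr_deriv (by rw [centeredCosh]; ring)

theorem nonneg_of_touch_centeredCosh {y y' y'' yo bs bo : ℝ → ℝ} {c κ lam α β γ δ m x₀ : ℝ}
    (hc : 0 < c) (hκ : 0 < κ) (hcκ : c * κ ≤ lam)
    (hbo : ∀ x ∈ Icc (0 : ℝ) 1, bo x ≤ 0) (hb : ∀ x ∈ Icc (0 : ℝ) 1, lam ^ 2 < bs x + bo x)
    (hα : 0 ≤ α) (hβ : 0 ≤ β) (hαβ : 0 < α + β) (hγ : 0 < γ) (hδ : 0 ≤ δ)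
    (hy : ∀ x ∈ Icc 0 1, HasDerivAt y (y' x) x) (hyy : ∀ x ∈ Ioo 0 1, HasDerivAt y' (y'' x) x)
    (hR0 : 0 ≤ α * y 0 - c * β * y' 0) (hR1 : 0 ≤ γ * y 1 + c * δ * y' 1)
    (hL : ∀ x ∈ Ioo 0 1, 0 ≤ -c ^ 2 * y'' x + bs x * y x + bo x * yo x)
    (hx₀ : x₀ ∈ Icc 0 1) (hlow : ∀ x ∈ Icc 0 1, m * centeredCosh κ x ≤ y x)
    (htouch : y x₀ = m * centeredCosh κ x₀) (hyo : m * centeredCosh κ x₀ ≤ yo x₀) : 0 ≤ m := by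
  have hC : 0 < cosh (κ / 2) := cosh_pos _
  have hS : 0 < c * κ * sinh (κ / 2) := mul_pos (mul_pos hc hκ) (sinh_pos_iff.2 (half_pos hκ))
  refine nonneg_of_touch (t' := fun x => κ * sinh (κ * (x - 1 / 2)))
    (t'' := fun x => κ ^ 2 * centeredCosh κ x) (by positivity) (by positivity) ?_ ?_ ?_
    (fun x hx => hbo x (Ioo_subset_Icc_self hx)) hy hyy (hasDerivAt_centeredCosh κ)
    (hasDerivAt_deriv_centeredCosh κ) hR0 hR1 hL hx₀ hlow htouch hyo
  · have h0 : κ * (0 - 1 / 2) = -(κ / 2) := by ring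
    rw [centeredCosh, h0, cosh_neg, sinh_neg]
    rcases hα.eq_or_lt with rfl | hα
    · nlinarith
    · nlinarith [mul_pos hα hC]
  · have h1 : κ * (1 - 1 / 2) = κ / 2 := by ring
    rw [centeredCosh, h1]
    nlinarith [mul_pos hγ hC]
  · intro x hx
    have hgap : (c * κ) ^ 2 < bs x + bo x :=
      (pow_le_pow_left₀ (by positivity) hcκ 2).trans_lt (hb x (Ioo_subset_Icc_self hx))
    have ht := centeredCosh_pos κ x
    nlinarith

theorem stmt_15_general (ε μ lam : ℝ) (hε : 0 < ε) (hεμ : ε ≤ μ)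
    (b11 b12 b21 b22 : ℝ → ℝ)
    (h12 : ∀ x ∈ Set.Icc (0 : ℝ) 1, b12 x ≤ 0)
    (h21 : ∀ x ∈ Set.Icc (0 : ℝ) 1, b21 x ≤ 0)
    (hlam : 0 < lam)
    (hmin : ∀ x ∈ Set.Icc (0 : ℝ) 1,
      lam ^ 2 < min (b11 x + b12 x) (b21 x + b22 x))
    (α₁ α₂ β₁ β₂ γ₁ γ₂ δ₁ δ₂ : ℝ)
    (hα₁ : 0 ≤ α₁) (hα₂ : 0 ≤ α₂) (hβ₁ : 0 ≤ β₁) (hβ₂ : 0 ≤ β₂)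
    (hαβ₁ : 0 < α₁ + β₁) (hαβ₂ : 0 < α₂ + β₂)
    (hγ₁ : 0 < γ₁) (hγ₂ : 0 < γ₂) (hδ₁ : 0 ≤ δ₁) (hδ₂ : 0 ≤ δ₂)
    (y₁ y₂ y₁' y₂' y₁'' y₂'' : ℝ → ℝ)
    (hy₁d : ∀ x ∈ Set.Icc (0 : ℝ) 1, HasDerivAt y₁ (y₁' x) x)
    (hy₂d : ∀ x ∈ Set.Icc (0 : ℝ) 1, HasDerivAt y₂ (y₂' x) x)
    (hy₁dd : ∀ x ∈ Set.Ioo (0 : ℝ) 1, HasDerivAt y₁' (y₁'' x) x)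
    (hy₂dd : ∀ x ∈ Set.Ioo (0 : ℝ) 1, HasDerivAt y₂' (y₂'' x) x)
    (hR10 : 0 ≤ α₁ * y₁ 0 - ε * β₁ * y₁' 0)
    (hR20 : 0 ≤ α₂ * y₂ 0 - μ * β₂ * y₂' 0)
    (hR11 : 0 ≤ γ₁ * y₁ 1 + ε * δ₁ * y₁' 1)
    (hR21 : 0 ≤ γ₂ * y₂ 1 + μ * δ₂ * y₂' 1)
    (hL1 : ∀ x ∈ Set.Ioo (0 : ℝ) 1,
      0 ≤ -ε ^ 2 * y₁'' x + b11 x * y₁ x + b12 x * y₂ x)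
    (hL2 : ∀ x ∈ Set.Ioo (0 : ℝ) 1,
      0 ≤ -μ ^ 2 * y₂'' x + b21 x * y₁ x + b22 x * y₂ x) :
    ∀ x ∈ Set.Icc (0 : ℝ) 1, 0 ≤ y₁ x ∧ 0 ≤ y₂ x := by
  intro x hx
  have hμ : 0 < μ := hε.trans_le hεμ
  have hκ : 0 < lam / μ := div_pos hlam hμ
  have hεκ : ε * (lam / μ) ≤ lam := by
    rw [mul_div_left_comm]
    exact mul_le_of_le_one_right hlam.le ((div_le_one hμ).2 hεμ)
  obtain ⟨m, x₀, hx₀, hlow, htouch⟩ := isCompact_Icc.exists_touching_multiple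
    (nonempty_Icc.2 zero_le_one) (fun z hz => (hy₁d z hz).continuousAt.continuousWithinAt)
    (fun z hz => (hy₂d z hz).continuousAt.continuousWithinAt)
    (continuous_centeredCosh _).continuousOn fun z _ => centeredCosh_pos (lam / μ) z
  suffices hm : 0 ≤ m by
    have hmt := mul_nonneg hm (centeredCosh_pos (lam / μ) x).le
    exact ⟨hmt.trans (hlow x hx).1, hmt.trans (hlow x hx).2⟩
  rcases htouch with h₁ | h₂
  · exact nonneg_of_touch_centeredCosh hε hκ hεκ h12
      (fun z hz => (hmin z hz).trans_le (min_le_left _ _)) hα₁ hβ₁ hαβ₁ hγ₁ hδ₁ hy₁d hy₁dd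
      hR10 hR11 hL1 hx₀ (fun z hz => (hlow z hz).1) h₁ (hlow x₀ hx₀).2
  · exact nonneg_of_touch_centeredCosh hμ hκ (mul_div_cancel₀ lam hμ.ne').le h21
      (fun z hz => add_comm (b21 z) _ ▸ (hmin z hz).trans_le (min_le_right _ _))
      hα₂ hβ₂ hαβ₂ hγ₂ hδ₂ hy₂d hy₂dd hR20 hR21 (fun z hz => (hL2 z hz).trans_eq (by ring))
      hx₀ (fun z hz => (hlow z hz).2) h₂ (hlow x₀ hx₀).1

theorem stmt_15 (ε μ lam : ℝ) (hε : 0 < ε) (hε1 : ε ≤ 1) (hεμ : ε ≤ μ) (hμ1 : μ ≤ 1)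
    (b11 b12 b21 b22 : ℝ → ℝ)
    (hb11 : ContinuousOn b11 (Set.Icc 0 1)) (hb12 : ContinuousOn b12 (Set.Icc 0 1))
    (hb21 : ContinuousOn b21 (Set.Icc 0 1)) (hb22 : ContinuousOn b22 (Set.Icc 0 1))
    (h12 : ∀ x ∈ Set.Icc (0 : ℝ) 1, b12 x ≤ 0)
    (h21 : ∀ x ∈ Set.Icc (0 : ℝ) 1, b21 x ≤ 0)
    (hlam : 0 < lam)
    (hmin : ∀ x ∈ Set.Icc (0 : ℝ) 1,
      lam ^ 2 < min (b11 x + b12 x) (b21 x + b22 x))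
    (α₁ α₂ β₁ β₂ γ₁ γ₂ δ₁ δ₂ : ℝ)
    (hα₁ : 0 ≤ α₁) (hα₂ : 0 ≤ α₂) (hβ₁ : 0 ≤ β₁) (hβ₂ : 0 ≤ β₂)
    (hαβ₁ : 0 < α₁ + β₁) (hαβ₂ : 0 < α₂ + β₂)
    (hγ₁ : 0 < γ₁) (hγ₂ : 0 < γ₂) (hδ₁ : 0 ≤ δ₁) (hδ₂ : 0 ≤ δ₂)
    (y₁ y₂ y₁' y₂' y₁'' y₂'' : ℝ → ℝ)
    (hy₁c : ContinuousOn y₁ (Set.Icc 0 1)) (hy₂c : ContinuousOn y₂ (Set.Icc 0 1))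
    (hy₁d : ∀ x ∈ Set.Icc (0 : ℝ) 1, HasDerivAt y₁ (y₁' x) x)
    (hy₂d : ∀ x ∈ Set.Icc (0 : ℝ) 1, HasDerivAt y₂ (y₂' x) x)
    (hy₁dd : ∀ x ∈ Set.Ioo (0 : ℝ) 1, HasDerivAt y₁' (y₁'' x) x)
    (hy₂dd : ∀ x ∈ Set.Ioo (0 : ℝ) 1, HasDerivAt y₂' (y₂'' x) x)
    (hR10 : 0 ≤ α₁ * y₁ 0 - ε * β₁ * y₁' 0)
    (hR20 : 0 ≤ α₂ * y₂ 0 - μ * β₂ * y₂' 0)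
    (hR11 : 0 ≤ γ₁ * y₁ 1 + ε * δ₁ * y₁' 1)
    (hR21 : 0 ≤ γ₂ * y₂ 1 + μ * δ₂ * y₂' 1)
    (hL1 : ∀ x ∈ Set.Ioo (0 : ℝ) 1,
      0 ≤ -ε ^ 2 * y₁'' x + b11 x * y₁ x + b12 x * y₂ x)
    (hL2 : ∀ x ∈ Set.Ioo (0 : ℝ) 1,
      0 ≤ -μ ^ 2 * y₂'' x + b21 x * y₁ x + b22 x * y₂ x) :
    ∀ x ∈ Set.Icc (0 : ℝ) 1, 0 ≤ y₁ x ∧ 0 ≤ y₂ x :=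
  stmt_15_general ε μ lam hε hεμ b11 b12 b21 b22 h12 h21 hlam hmin α₁ α₂ β₁ β₂ γ₁ γ₂ δ₁ δ₂ hα₁ hα₂
    hβ₁ hβ₂ hαβ₁ hαβ₂ hγ₁ hγ₂ hδ₁ hδ₂ y₁ y₂ y₁' y₂' y₁'' y₂'' hy₁d hy₂d hy₁dd hy₂dd hR10 hR20 hR11
    hR21 hL1 hL2
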